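/- Let m, n ≥ 0, E = 2m + n, U unitary on ℂ^E, T the block matrix [[0, e^{ikl},0],[e^{ikl},0,0],[0,0,0_n]] and T̃ the matrix obtained from T by replacing the lower-right 0_n block by the identity 1_n (k real, l_j > 0). Then every eigenvalue μ of UT with |μ| = 1 is semi-simple, i.e., its geometric multiplicity equals its algebraic multiplicity. -/

import Mathlib

open Matrix

/-- Index type for ℂ^E with E = 2m + n. -/
abbrev GraphIdx (m n : ℕ) := Fin m ⊕ (Fin m ⊕ Fin n)

/-- The matrix T(k;l): blocks [[0, e^{ikl}, 0],[e^{ikl}, 0, 0],[0,0,0]]. -/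
noncomputable def Tmat (m n : ℕ) (k : ℝ) (l : Fin m → ℝ) :
    Matrix (GraphIdx m n) (GraphIdx m n) ℂ :=
  Matrix.of fun i j =>
    match i, j with
    | Sum.inl a, Sum.inr (Sum.inl b) =>
        if a = b then Complex.exp (Complex.I * k * (l a : ℂ)) else 0
    | Sum.inr (Sum.inl a), Sum.inl b =>
        if a = b then Complex.exp (Complex.I * k * (l a : ℂ)) else 0
    | _, _ => 0

/-!
In the Euclidean norm `U` is an isometry and `T` a contraction (up to unimodular phases it swaps
the first two blocks of coordinates and kills the third), so every power of `UT` is a contraction.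
A Jordan chain `f w = μ w + v`, `f v = μ v` with `|μ| = 1` gives
`f^(N+1) w = μ^(N+1) w + (N+1) μ^N v`, which grows linearly in `N` unless `v = 0`. Hence the
generalised eigenspace of a unimodular eigenvalue is the eigenspace, and the dimension of the
former is the root multiplicity of `μ` in the characteristic polynomial.
-/
namespace Module.End

lemma pow_succ_apply_of_apply_eq_smul_add {R M : Type*} [CommRing R] [AddCommGroup M]
    [Module R M] {f : End R M} {μ : R} {v w : M} (hw : f w = μ • w + v) (hv : f v = μ • v)
    (N : ℕ) : (f ^ (N + 1)) w = μ ^ (N + 1) • w + (((N : R) + 1) * μ ^ N) • v := by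
  induction N with
  | zero => simpa using hw
  | succ N ih =>
    rw [pow_succ', mul_apply, ih, map_add, map_smul, map_smul, hw, hv]
    push_cast
    module

variable {𝕜 E : Type*} [RCLike 𝕜] [NormedAddCommGroup E] [NormedSpace 𝕜 E]
  {f : End 𝕜 E} {C : ℝ} {μ : 𝕜}

lemma eq_zero_of_apply_eq_smul_add_of_norm_pow_apply_le
    (hf : ∀ N x, ‖(f ^ N) x‖ ≤ C * ‖x‖) (hμ : ‖μ‖ = 1) {v w : E}
    (hw : f w = μ • w + v) (hv : f v = μ • v) : v = 0 := by
  have hgrowth : ∀ N : ℕ, ((N : ℝ) + 1) * ‖v‖ ≤ (C + 1) * ‖w‖ := fun N => calc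
    ((N : ℝ) + 1) * ‖v‖ = ‖(((N : 𝕜) + 1) * μ ^ N) • v‖ := by
      rw [norm_smul, norm_mul, norm_pow, hμ, one_pow, mul_one]
      norm_cast
    _ = ‖(f ^ (N + 1)) w - μ ^ (N + 1) • w‖ := by
      rw [pow_succ_apply_of_apply_eq_smul_add hw hv, add_sub_cancel_left]
    _ ≤ C * ‖w‖ + ‖w‖ := by
      grw [norm_sub_le, hf, norm_smul, norm_pow, hμ, one_pow, one_mul]
    _ = (C + 1) * ‖w‖ := by ring
  by_contra hv0
  have hpos : 0 < ‖v‖ := norm_pos_iff.mpr hv0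
  obtain ⟨N, hN⟩ := exists_nat_gt ((C + 1) * ‖w‖ / ‖v‖)
  linarith [(div_lt_iff₀ hpos).mp hN, hgrowth N]

theorem maxGenEigenspace_eq_eigenspace_of_norm_pow_apply_le
    (hf : ∀ N x, ‖(f ^ N) x‖ ≤ C * ‖x‖) (hμ : ‖μ‖ = 1) :
    f.maxGenEigenspace μ = f.eigenspace μ := by
  refine le_antisymm (fun x hx => ?_) eigenspace_le_maxGenEigenspace
  obtain ⟨K, hK⟩ := (mem_maxGenEigenspace f μ x).mp hx
  rw [mem_eigenspace_iff, ← sub_eq_zero]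
  clear hx
  induction K generalizing x with
  | zero => simp_all
  | succ K ih =>
    rw [pow_succ, mul_apply] at hK
    have hv := sub_eq_zero.mp (ih _ hK)
    simp only [LinearMap.sub_apply, LinearMap.smul_apply, one_apply] at hv ⊢
    exact eq_zero_of_apply_eq_smul_add_of_norm_pow_apply_le hf hμ (by abel) hv

end Module.End

namespace Matrix

variable {ι 𝕜 : Type*} [Fintype ι] [DecidableEq ι] [RCLike 𝕜]

lemma norm_toEuclideanLin_apply_of_mem_unitaryGroup {U : Matrix ι ι 𝕜}
    (hU : U ∈ unitaryGroup ι 𝕜) (x : EuclideanSpace 𝕜 ι) : ‖toEuclideanLin U x‖ = ‖x‖ :=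
  (toEuclideanCLM (n := ι) (𝕜 := 𝕜) U).norm_map_of_mem_unitary
    (Unitary.map_mem toEuclideanCLM hU) x

lemma exists_norm_pow_mulVec_le {A : Matrix ι ι 𝕜}
    (hA : ∀ x, ‖toEuclideanLin A x‖ ≤ ‖x‖) : ∃ C, ∀ N x, ‖(A ^ N) *ᵥ x‖ ≤ C * ‖x‖ := by
  have hpow : ∀ N x, ‖WithLp.toLp 2 ((A ^ N) *ᵥ x)‖ ≤ ‖WithLp.toLp 2 x‖ := by
    intro N
    induction N with
    | zero => simp
    | succ N ih =>
      intro x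
      rw [pow_succ', ← mulVec_mulVec]
      have := hA (WithLp.toLp 2 ((A ^ N) *ᵥ x))
      rw [toLpLin_toLp, toLin'_apply] at this
      exact this.trans (ih x)
  let e : (ι → 𝕜) →L[𝕜] EuclideanSpace 𝕜 ι := (EuclideanSpace.equiv ι 𝕜).symm
  refine ⟨‖e‖, fun N x => ?_⟩
  calc ‖(A ^ N) *ᵥ x‖ ≤ ‖WithLp.toLp 2 ((A ^ N) *ᵥ x)‖ :=
        (pi_norm_le_iff_of_nonneg (norm_nonneg _)).mpr fun i =>
          PiLp.norm_apply_le (WithLp.toLp 2 ((A ^ N) *ᵥ x)) i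
    _ ≤ ‖e x‖ := hpow N x
    _ ≤ ‖e‖ * ‖x‖ := e.le_opNorm x

theorem maxGenEigenspace_mulVecLin_eq_eigenspace {A : Matrix ι ι 𝕜}
    (hA : ∀ x, ‖toEuclideanLin A x‖ ≤ ‖x‖) {μ : 𝕜} (hμ : ‖μ‖ = 1) :
    Module.End.maxGenEigenspace A.mulVecLin μ = Module.End.eigenspace A.mulVecLin μ := by
  obtain ⟨C, hC⟩ := exists_norm_pow_mulVec_le hA
  refine Module.End.maxGenEigenspace_eq_eigenspace_of_norm_pow_apply_le (C := C) (fun N x => ?_) hμ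
  rw [← toLin'_apply', ← toLin'_pow, toLin'_apply]
  exact hC N x

end Matrix

lemma norm_toEuclideanLin_Tmat_apply_le {m n : ℕ} (k : ℝ) (l : Fin m → ℝ)
    (x : EuclideanSpace ℂ (GraphIdx m n)) : ‖toEuclideanLin (Tmat m n k l) x‖ ≤ ‖x‖ := by
  have hphase : ∀ a, ‖Complex.exp (Complex.I * k * (l a : ℂ))‖ = 1 := fun a => by
    rw [show Complex.I * k * (l a : ℂ) = ((k * l a : ℝ) : ℂ) * Complex.I by push_cast; ring]
    exact Complex.norm_exp_ofReal_mul_I _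
  rw [EuclideanSpace.norm_eq, EuclideanSpace.norm_eq]
  refine Real.sqrt_le_sqrt ?_
  simp only [Tmat, toLpLin_apply, mulVec, dotProduct, of_apply, Fintype.sum_sum_type, zero_mul,
    Finset.sum_const_zero, add_zero, ite_mul, Finset.sum_ite_eq, Finset.mem_univ, ↓reduceIte, zero_add,
    Complex.norm_mul, hphase, one_mul, norm_zero, ne_eq, OfNat.ofNat_ne_zero, not_false_eq_true, zero_pow]
  have : 0 ≤ ∑ b : Fin n, ‖x.ofLp (Sum.inr (Sum.inr b))‖ ^ 2 := by positivity
  linarith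

theorem stmt14_general {m n : ℕ} (U : Matrix (GraphIdx m n) (GraphIdx m n) ℂ)
    (hU : U ∈ Matrix.unitaryGroup (GraphIdx m n) ℂ)
    (k : ℝ) (l : Fin m → ℝ) (μ : ℂ)
    (hμ : ‖μ‖ = 1) :
    Module.finrank ℂ ↥(Module.End.eigenspace (U * Tmat m n k l).mulVecLin μ) =
      Polynomial.rootMultiplicity μ (Matrix.charpoly (U * Tmat m n k l)) := by
  have hcontr : ∀ x, ‖toEuclideanLin (U * Tmat m n k l) x‖ ≤ ‖x‖ := fun x => by
    rw [toLpLin_mul_same, LinearMap.comp_apply, norm_toEuclideanLin_apply_of_mem_unitaryGroup hU]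
    exact norm_toEuclideanLin_Tmat_apply_le k l x
  rw [← maxGenEigenspace_mulVecLin_eq_eigenspace hcontr hμ,
    LinearMap.finrank_maxGenEigenspace_eq, charpoly_mulVecLin]

/-- Every eigenvalue μ of UT with |μ| = 1 is semi-simple: its geometric multiplicity
(dimension of the eigenspace) equals its algebraic multiplicity (root multiplicity
in the characteristic polynomial). -/
theorem stmt14 {m n : ℕ} (U : Matrix (GraphIdx m n) (GraphIdx m n) ℂ)
    (hU : U ∈ Matrix.unitaryGroup (GraphIdx m n) ℂ)
    (k : ℝ) (l : Fin m → ℝ) (hl : ∀ i, 0 < l i) (μ : ℂ)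
    (hμ : ‖μ‖ = 1)
    (heig : Module.End.HasEigenvalue (U * Tmat m n k l).mulVecLin μ) :
    Module.finrank ℂ ↥(Module.End.eigenspace (U * Tmat m n k l).mulVecLin μ) =
      Polynomial.rootMultiplicity μ (Matrix.charpoly (U * Tmat m n k l)) :=
  stmt14_general U hU k l μ hμ
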